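/- arXiv:2205.13875 — 6 statements merged into one kernel-verified Lean document; each statement's English description precedes it below -/
import Mathlib

section
/- Let 0 ≤ α < β, T > 0 and j a natural number. Define G(s) := (β−α)²·e^{(β−α)T} / (β(1−s)e^{(β−α)T} + βs − α)² for s ∈ [0,1], and A := (β·e^{(β−α)T} − α) / ((β−α)·e^{βT}). Then (e^{−(α+β)T}/j!) · ∫₀¹ ( (α+β)T + log G(s) )^j ds = 2^j · e^{−αT} · (β−α)/(β(e^{(β−α)T} − 1)) · Σ_{i=0}^{j} (1/i!) · ( A·(−log A)^i − e^{−βT}·(βT)^i ). -/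
/-!
Put `u(s) = D(s) / ((β - α) e^{βT})`, where `D(s)` is the denominator of `∂_s F_T(s)`. Then
`∂_s F_T(s) = e^{-(α+β)T} / u(s)²`, so the integrand is `(-2 log u(s))^j`, and `u` is affine in `s`,
running from `A` at `s = 0` to `e^{-βT}` at `s = 1`. After the substitution `x = u(s)` the integral is
`∫ (-log x)^j dx`, which is elementary: `x ∑_{i ≤ j} (-log x)^i / i!` is an antiderivative of
`(-log x)^j / j!` (the terms telescope).
-/

open Real MeasureTheory intervalIntegral

/-- At `x = e^{-t}` this is the regularized upper incomplete gamma function `Q(j + 1, t)`. -/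
noncomputable def gammaTail (j : ℕ) (x : ℝ) : ℝ :=
  x * ∑ i ∈ Finset.range (j + 1), (-log x) ^ i / i.factorial

lemma gammaTail_succ (j : ℕ) (x : ℝ) :
    gammaTail (j + 1) x = gammaTail j x + x * (-log x) ^ (j + 1) / (j + 1).factorial := by
  rw [gammaTail, Finset.sum_range_succ, mul_add, ← gammaTail, mul_div_assoc]

lemma hasDerivAt_mul_neg_log_pow_div_factorial (j : ℕ) {x : ℝ} (hx : x ≠ 0) :
    HasDerivAt (fun x ↦ x * (-log x) ^ (j + 1) / (j + 1).factorial)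
      ((-log x) ^ (j + 1) / (j + 1).factorial - (-log x) ^ j / j.factorial) x := by
  have hpow : HasDerivAt (fun y ↦ (-log y) ^ (j + 1)) ((j + 1) * (-log x) ^ j * -x⁻¹) x := by
    simpa using (hasDerivAt_log hx).fun_neg.fun_pow (j + 1)
  refine (((hasDerivAt_id' x).mul hpow).div_const ((j + 1).factorial : ℝ)).congr_deriv ?_
  rw [Nat.factorial_succ]
  push_cast
  field_simp
  ring

lemma hasDerivAt_gammaTail (j : ℕ) {x : ℝ} (hx : x ≠ 0) :
    HasDerivAt (gammaTail j) ((-log x) ^ j / j.factorial) x := by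
  induction j with
  | zero =>
    have h0 : gammaTail 0 = id := funext fun y ↦ by simp [gammaTail]
    simpa [h0] using hasDerivAt_id x
  | succ j ih =>
    have h := ih.add (hasDerivAt_mul_neg_log_pow_div_factorial j hx)
    rw [add_sub_cancel] at h
    exact h.congr_of_eventuallyEq (.of_forall fun y ↦ gammaTail_succ j y)

theorem integral_neg_log_pow_div_factorial (j : ℕ) {a b : ℝ} (ha : 0 < a) (hb : 0 < b) :
    ∫ x in a..b, (-log x) ^ j / j.factorial = gammaTail j b - gammaTail j a := by
  have hpos : ∀ x ∈ Set.uIcc a b, 0 < x := fun x hx ↦ (lt_min ha hb).trans_le hx.1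
  refine integral_eq_sub_of_hasDerivAt (fun x hx ↦ hasDerivAt_gammaTail j (hpos x hx).ne')
    (ContinuousOn.intervalIntegrable ?_)
  exact ((continuousOn_log.mono fun x hx ↦ (hpos x hx).ne').neg.pow j).div_const _

theorem integral_neg_log_convexComb_pow (j : ℕ) {a b : ℝ} (ha : 0 < a) (hb : 0 < b) (hab : a ≠ b) :
    ∫ s in (0 : ℝ)..1, (-log ((1 - s) * a + s * b)) ^ j
      = j.factorial * (gammaTail j a - gammaTail j b) / (a - b) := by
  have hj : (j.factorial : ℝ) ≠ 0 := by positivity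
  have hsub := integral_comp_sub_mul (fun x ↦ (-log x) ^ j / j.factorial) (sub_ne_zero.2 hab)
    (a := 0) (b := 1) a
  simp only [mul_one, mul_zero, sub_zero, sub_sub_cancel, intervalIntegral.integral_div,
    integral_neg_log_pow_div_factorial j hb ha, smul_eq_mul] at hsub
  simp_rw [show ∀ s : ℝ, (1 - s) * a + s * b = a - (a - b) * s by intro s; ring]
  field_simp at hsub ⊢
  linear_combination hsub

lemma gammaTail_sub_gammaTail (j : ℕ) (a b : ℝ) :
    gammaTail j a - gammaTail j b
      = ∑ i ∈ Finset.range (j + 1), 1 / (i.factorial : ℝ) * (a * (-log a) ^ i - b * (-log b) ^ i) := by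
  simp only [gammaTail, Finset.mul_sum, ← Finset.sum_sub_distrib]
  exact Finset.sum_congr rfl fun i _ ↦ by ring

namespace BirthDeath

variable {α β T : ℝ}

/-- The constant `A` of the statement, the value of `u(0)`. -/
noncomputable def startValue (α β T : ℝ) : ℝ :=
  (β * exp ((β - α) * T) - α) / ((β - α) * exp (β * T))

lemma denom_div_eq_convexComb (hαβ : α ≠ β) (s : ℝ) :
    (β * (1 - s) * exp ((β - α) * T) + β * s - α) / ((β - α) * exp (β * T))
      = (1 - s) * startValue α β T + s * exp (-(β * T)) := by
  have : β - α ≠ 0 := sub_ne_zero.2 hαβ.symm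
  rw [startValue, exp_neg]
  field_simp
  ring

lemma partialDerivative_eq_exp_div_sq (α β T D : ℝ) :
    (β - α) ^ 2 * exp ((β - α) * T) / D ^ 2
      = exp (-((α + β) * T)) / (D / ((β - α) * exp (β * T))) ^ 2 := by
  have hexp : exp ((β - α) * T) = exp (-((α + β) * T)) * exp (β * T) ^ 2 := by
    rw [← exp_nat_mul, ← exp_add]
    ring_nf
  rw [hexp, div_pow, div_div_eq_mul_div, mul_pow]
  ring

lemma add_log_partialDerivative (α β T : ℝ) {D : ℝ} (hD : D / ((β - α) * exp (β * T)) ≠ 0) :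
    (α + β) * T + log ((β - α) ^ 2 * exp ((β - α) * T) / D ^ 2)
      = 2 * -log (D / ((β - α) * exp (β * T))) := by
  rw [partialDerivative_eq_exp_div_sq, log_div (exp_pos _).ne' (pow_ne_zero 2 hD), log_exp, log_pow]
  push_cast
  ring

lemma startValue_sub_exp (hαβ : α ≠ β) :
    startValue α β T - exp (-(β * T)) = β * (exp ((β - α) * T) - 1) / ((β - α) * exp (β * T)) := by
  have := denom_div_eq_convexComb (T := T) hαβ 1
  simp only [sub_self, zero_mul, one_mul, zero_add] at this
  rw [startValue, ← this]
  ring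

lemma one_lt_exp_mul (hαβ : α < β) (hT : 0 < T) : 1 < exp ((β - α) * T) :=
  one_lt_exp_iff.2 (mul_pos (sub_pos.2 hαβ) hT)

lemma startValue_pos (hα : 0 ≤ α) (hαβ : α < β) (hT : 0 < T) : 0 < startValue α β T := by
  have hE := one_lt_exp_mul hαβ hT
  have hβE : α < β * exp ((β - α) * T) := by nlinarith
  exact div_pos (sub_pos.2 hβE) (mul_pos (sub_pos.2 hαβ) (exp_pos _))

lemma exp_lt_startValue (hα : 0 ≤ α) (hαβ : α < β) (hT : 0 < T) :
    exp (-(β * T)) < startValue α β T := by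
  rw [← sub_pos, startValue_sub_exp hαβ.ne]
  exact div_pos (mul_pos (hα.trans_lt hαβ) (sub_pos.2 (one_lt_exp_mul hαβ hT)))
    (mul_pos (sub_pos.2 hαβ) (exp_pos _))

lemma exp_neg_div_startValue_sub_exp (hα : 0 ≤ α) (hαβ : α < β) (hT : 0 < T) :
    exp (-((α + β) * T)) / (startValue α β T - exp (-(β * T)))
      = exp (-(α * T)) * ((β - α) / (β * (exp ((β - α) * T) - 1))) := by
  have hβ : β ≠ 0 := (hα.trans_lt hαβ).ne'
  have hE : exp ((β - α) * T) - 1 ≠ 0 := (sub_pos.2 (one_lt_exp_mul hαβ hT)).ne'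
  have hexp : exp (-((α + β) * T)) * exp (β * T) = exp (-(α * T)) := by
    rw [← exp_add]; ring_nf
  rw [startValue_sub_exp hαβ.ne, ← hexp]
  field_simp

end BirthDeath

open BirthDeath

/-- Section 3.3: explicit evaluation of
`(e^{-(α+β)T}/j!) ∫₀¹ ((α+β)T + log ∂_sF_T(s))^j ds` for the birth-death process. -/
theorem birth_death_event_count_integral
    (α β T : ℝ) (hα : 0 ≤ α) (hαβ : α < β) (hT : 0 < T) (j : ℕ) :
    (Real.exp (-((α + β) * T)) / (Nat.factorial j : ℝ)) *
        ∫ s in (0 : ℝ)..1,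
          ((α + β) * T +
            Real.log ((β - α) ^ 2 * Real.exp ((β - α) * T) /
              (β * (1 - s) * Real.exp ((β - α) * T) + β * s - α) ^ 2)) ^ j
      = 2 ^ j * Real.exp (-(α * T)) *
          ((β - α) / (β * (Real.exp ((β - α) * T) - 1))) *
          ∑ i ∈ Finset.range (j + 1),
            (1 / (Nat.factorial i : ℝ)) *
              (((β * Real.exp ((β - α) * T) - α) / ((β - α) * Real.exp (β * T))) *
                  (-Real.log ((β * Real.exp ((β - α) * T) - α) /
                      ((β - α) * Real.exp (β * T)))) ^ i -
                Real.exp (-(β * T)) * (β * T) ^ i) := by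
  have hA := startValue_pos hα hαβ hT
  have hB := exp_pos (-(β * T))
  have hu : ∀ s ∈ Set.uIcc (0 : ℝ) 1, 0 < (1 - s) * startValue α β T + s * exp (-(β * T)) := by
    intro s hs
    rw [Set.uIcc_of_le zero_le_one] at hs
    exact convex_Ioi (0 : ℝ) hA hB (sub_nonneg.2 hs.2) hs.1 (sub_add_cancel 1 s)
  have integrand : ∀ s ∈ Set.uIcc (0 : ℝ) 1,
      ((α + β) * T + log ((β - α) ^ 2 * exp ((β - α) * T) /
        (β * (1 - s) * exp ((β - α) * T) + β * s - α) ^ 2)) ^ j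
        = 2 ^ j * (-log ((1 - s) * startValue α β T + s * exp (-(β * T)))) ^ j := by
    intro s hs
    rw [add_log_partialDerivative α β T (by rw [denom_div_eq_convexComb hαβ.ne]; exact (hu s hs).ne'),
      denom_div_eq_convexComb hαβ.ne, mul_pow]
  rw [integral_congr integrand, intervalIntegral.integral_const_mul,
    integral_neg_log_convexComb_pow j hA hB (exp_lt_startValue hα hαβ hT).ne',
    gammaTail_sub_gammaTail, log_exp, neg_neg, mul_assoc (2 ^ j : ℝ),
    ← exp_neg_div_startValue_sub_exp hα hαβ hT]
  change _ = _ * _ * ∑ i ∈ _, _ * (startValue α β T * (-log (startValue α β T)) ^ i - _)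
  field_simp
end

section
/- Let β > 0, T > 0 and j a natural number. Then (e^{−βT}/j!) · ∫₀¹ ( βT + log( e^{βT} / ((1−s)e^{βT} + s)² ) )^j ds = (2^j / (e^{βT} − 1)) · ( 1 − e^{−βT} · Σ_{i=0}^{j} (βT)^i / i! ). -/
open Real MeasureTheory intervalIntegral Finset
open scoped Nat

/-!
Since `(1 - s) e^a + s > 0` on `[0, 1]`, the integrand equals `(2 (a - log ((1 - s) e^a + s)))^j`
with `a = βT`. The substitution `c = a - log ((1 - s) e^a + s)` maps `[0, 1]` onto `[0, a]` and
turns `ds` into `e^a / (e^a - 1) · e^{-c} dc`, leaving the incomplete Gamma integral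
`∫₀^a c^j e^{-c} dc = j! (1 - e^{-a} ∑_{i ≤ j} a^i / i!)`.
-/

lemma hasDerivAt_sum_range_pow_div_factorial (j : ℕ) (x : ℝ) :
    HasDerivAt (fun x : ℝ => ∑ i ∈ range (j + 1), x ^ i / (i ! : ℝ))
      (∑ i ∈ range j, x ^ i / (i ! : ℝ)) x := by
  induction j with
  | zero => simpa using hasDerivAt_const x (1 : ℝ)
  | succ j ih =>
    simp only [sum_range_succ _ (j + 1)]
    refine (ih.fun_add ((hasDerivAt_pow (j + 1) x).div_const _)).congr_deriv ?_
    rw [sum_range_succ, Nat.factorial_succ]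
    push_cast
    field_simp

theorem integral_pow_mul_exp_neg (j : ℕ) (a : ℝ) :
    ∫ x in (0 : ℝ)..a, x ^ j * exp (-x) =
      j ! * (1 - exp (-a) * ∑ i ∈ range (j + 1), a ^ i / (i ! : ℝ)) := by
  have hderiv : ∀ x : ℝ, HasDerivAt
      (fun x => -(j ! * (exp (-x) * ∑ i ∈ range (j + 1), x ^ i / (i ! : ℝ))))
      (x ^ j * exp (-x)) x := fun x =>
    ((((hasDerivAt_neg x).exp.fun_mul (hasDerivAt_sum_range_pow_div_factorial j x)).const_mul
      (j ! : ℝ)).fun_neg).congr_deriv (by rw [sum_range_succ]; field_simp; ring)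
  rw [integral_eq_sub_of_hasDerivAt (fun x _ => hderiv x)
    ((by fun_prop : Continuous fun x : ℝ => x ^ j * exp (-x)).intervalIntegrable _ _)]
  have hsum_zero : ∑ i ∈ range (j + 1), (0 : ℝ) ^ i / (i ! : ℝ) = 1 := by
    simp [sum_range_succ']
  rw [neg_zero, exp_zero, hsum_zero]
  ring

theorem integral_comp_sub_log_one_sub_mul_exp_add {a : ℝ} (ha : 0 < a) (f : ℝ → ℝ) :
    ∫ s in (0 : ℝ)..1, f (a - log ((1 - s) * exp a + s)) =
      exp a / (exp a - 1) * ∫ c in (0 : ℝ)..a, f c * exp (-c) := by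
  have hE : 1 < exp a := one_lt_exp_iff.mpr ha
  have hE' : exp a - 1 ≠ 0 := (sub_pos.mpr hE).ne'
  set ψ : ℝ → ℝ := fun c => exp a * (1 - exp (-c)) / (exp a - 1)
  have hψ : ∀ c, HasDerivAt ψ (exp a / (exp a - 1) * exp (-c)) c := fun c =>
    ((((hasDerivAt_neg c).exp.const_sub 1).const_mul (exp a)).div_const (exp a - 1)).congr_deriv
      (by ring)
  have hψ_log : ∀ c, a - log ((1 - ψ c) * exp a + ψ c) = c := by
    intro c
    have : (1 - ψ c) * exp a + ψ c = exp (a - c) := by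
      simp only [ψ, exp_sub, exp_neg]; field_simp; ring
    rw [this, log_exp]; ring
  have hψ0 : ψ 0 = 0 := by simp [ψ]
  have hψa : ψ a = 1 := by simp only [ψ, exp_neg]; field_simp
  have key := integral_comp_mul_deriv_of_deriv_nonneg
    (a := 0) (b := a) (g := fun s => f (a - log ((1 - s) * exp a + s)))
    (fun c _ => (hψ c).continuousAt.continuousWithinAt) (fun c _ => hψ c)
    (fun c _ => by positivity)
  rw [hψ0, hψa] at key
  rw [← key, ← intervalIntegral.integral_const_mul]
  congr with c
  simp only [Function.comp, hψ_log]
  ring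

lemma add_log_exp_div_sq (a : ℝ) {u : ℝ} (hu : 0 < u) :
    a + log (exp a / u ^ 2) = 2 * (a - log u) := by
  rw [log_div (exp_pos a).ne' (by positivity), log_exp, log_pow]
  push_cast
  ring

/-- Equation (Yule): the distribution of the number of ancestral reproduction events
for a Yule process with birth rate `β` sampled at time `T`. -/
theorem yule_event_count_integral
    (β T : ℝ) (hβ : 0 < β) (hT : 0 < T) (j : ℕ) :
    (Real.exp (-(β * T)) / (Nat.factorial j : ℝ)) *
        ∫ s in (0 : ℝ)..1,
          (β * T + Real.log (Real.exp (β * T) /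
            ((1 - s) * Real.exp (β * T) + s) ^ 2)) ^ j
      = (2 ^ j / (Real.exp (β * T) - 1)) *
          (1 - Real.exp (-(β * T)) *
            ∑ i ∈ Finset.range (j + 1), (β * T) ^ i / (Nat.factorial i : ℝ)) := by
  set a := β * T
  have ha : 0 < a := mul_pos hβ hT
  have hE : 1 < exp a := one_lt_exp_iff.mpr ha
  have hintegrand : ∀ s ∈ Set.uIcc (0 : ℝ) 1,
      (a + log (exp a / ((1 - s) * exp a + s) ^ 2)) ^ j =
      (fun c => (2 * c) ^ j) (a - log ((1 - s) * exp a + s)) := by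
    intro s hs
    rw [Set.uIcc_of_le zero_le_one] at hs
    rw [add_log_exp_div_sq a (by nlinarith [hs.1, hs.2])]
  rw [integral_congr hintegrand,
    integral_comp_sub_log_one_sub_mul_exp_add ha (fun c => (2 * c) ^ j)]
  simp_rw [mul_pow, mul_assoc]
  rw [intervalIntegral.integral_const_mul, integral_pow_mul_exp_neg, exp_neg]
  have : exp a - 1 ≠ 0 := (sub_pos.mpr hE).ne'
  field_simp
end

section
/- Let β > 0, T > 0 and j a natural number. Then (1+βT) · (e^{−2βT}/j!) · ∫₀¹ ( 2βT − 2·log(1 + βT(1−s)) )^j ds = 2^j · e^{−βT} · ((βT+1)/(βT)) · Σ_{i=0}^{j} (1/i!) · ( (1+βT)·e^{−βT} · ( log( e^{βT}/(1+βT) ) )^i − (βT)^i · e^{−βT} ). -/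
/-!
Substituting `v = 1 + βT(1 - s)` turns the integral into
`(1 / βT) ∫₁^{1+βT} (2βT - 2 log v)^j dv`.
With `e_n(x) = ∑_{i ≤ n} xⁱ / i!`, the derivative of `e_n` is `e_n - xⁿ / n!`, so
`v ↦ n! · v · e_n(c - log v)` is an antiderivative of `(c - log v)ⁿ` (the sum telescopes).
Evaluating at the endpoints gives both sides as `e^{-βT}`-multiples of
`(1 + βT) e_j(βT - log(1 + βT)) - e_j(βT)`.
-/

open Real MeasureTheory intervalIntegral
open scoped Nat

noncomputable def expPartialSum (n : ℕ) (x : ℝ) : ℝ :=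
  ∑ i ∈ Finset.range (n + 1), x ^ i / i !

lemma expPartialSum_succ (n : ℕ) (x : ℝ) :
    expPartialSum (n + 1) x = expPartialSum n x + x ^ (n + 1) / (n + 1)! :=
  Finset.sum_range_succ _ _

lemma hasDerivAt_expPartialSum (n : ℕ) (x : ℝ) :
    HasDerivAt (expPartialSum n) (expPartialSum n x - x ^ n / n !) x := by
  induction n with
  | zero =>
    have h0 : expPartialSum 0 = fun _ => 1 := funext fun _ => by simp [expPartialSum]
    simpa [h0] using hasDerivAt_const x (1 : ℝ)
  | succ n ih =>
    have hpow : HasDerivAt (fun x : ℝ => x ^ (n + 1) / ((n + 1)! : ℝ)) (x ^ n / n !) x :=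
      ((hasDerivAt_pow (n + 1) x).div_const _).congr_deriv (by
        rw [Nat.factorial_succ]
        push_cast
        field_simp)
    have h := (ih.fun_add hpow).congr_deriv
      (show _ = expPartialSum (n + 1) x - x ^ (n + 1) / (n + 1)! by rw [expPartialSum_succ]; ring)
    rwa [← funext (expPartialSum_succ n)] at h

lemma hasDerivAt_mul_expPartialSum_sub_log (n : ℕ) (c : ℝ) {v : ℝ} (hv : v ≠ 0) :
    HasDerivAt (fun v => n ! * (v * expPartialSum n (c - log v))) ((c - log v) ^ n) v := by
  have hw : HasDerivAt (fun v => c - log v) (-v⁻¹) v := (hasDerivAt_log hv).const_sub c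
  have he := (hasDerivAt_expPartialSum n (c - log v)).comp v hw
  refine (((hasDerivAt_id' v).fun_mul he).const_mul (n ! : ℝ)).congr_deriv ?_
  simp only [Function.comp_apply]
  field_simp
  ring

lemma integral_sub_log_pow {x y : ℝ} (h : (0 : ℝ) ∉ Set.uIcc x y) (c : ℝ) (n : ℕ) :
    ∫ v in x..y, (c - log v) ^ n
      = n ! * (y * expPartialSum n (c - log y) - x * expPartialSum n (c - log x)) := by
  have hne : ∀ v ∈ Set.uIcc x y, v ≠ 0 := fun v hv h0 => h (h0 ▸ hv)
  rw [integral_eq_sub_of_hasDerivAt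
    (fun v hv => hasDerivAt_mul_expPartialSum_sub_log n c (hne v hv))
    ((continuousOn_const.sub (continuousOn_log.mono hne)).pow n).intervalIntegrable]
  ring

lemma integral_two_mul_sub_log_one_add_mul_pow {a : ℝ} (ha : a ≠ 0) (ha' : -1 < a) (n : ℕ) :
    ∫ s in (0 : ℝ)..1, (2 * a - 2 * log (1 + a * (1 - s))) ^ n
      = 2 ^ n * n ! / a * ((1 + a) * expPartialSum n (a - log (1 + a)) - expPartialSum n a) := by
  have hsubst : ∀ s : ℝ, (2 * a - 2 * log (1 + a * (1 - s))) ^ n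
      = 2 ^ n * (a - log ((1 + a) - a * s)) ^ n := fun s => by
    rw [← mul_pow]; ring_nf
  have h0 : (0 : ℝ) ∉ Set.uIcc 1 (1 + a) := by
    rw [Set.mem_uIcc]
    rintro (⟨h1, -⟩ | ⟨h1, -⟩) <;> linarith
  simp_rw [hsubst, intervalIntegral.integral_const_mul,
    integral_comp_sub_mul (fun s => (a - log s) ^ n) ha, mul_one, mul_zero, sub_zero,
    add_sub_cancel_right, integral_sub_log_pow h0, log_one,
    sub_zero, smul_eq_mul]
  field_simp

/-- Equation (cc): the conditional distribution of the number of ancestral reproduction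
events for a critical birth-death process with birth and death rate `β`. -/
theorem critical_birth_death_event_count
    (β T : ℝ) (hβ : 0 < β) (hT : 0 < T) (j : ℕ) :
    (1 + β * T) * (Real.exp (-(2 * β * T)) / (Nat.factorial j : ℝ)) *
        ∫ s in (0 : ℝ)..1,
          (2 * β * T - 2 * Real.log (1 + β * T * (1 - s))) ^ j
      = 2 ^ j * Real.exp (-(β * T)) * ((β * T + 1) / (β * T)) *
          ∑ i ∈ Finset.range (j + 1),
            (1 / (Nat.factorial i : ℝ)) *
              ((1 + β * T) * Real.exp (-(β * T)) *
                  (Real.log (Real.exp (β * T) / (1 + β * T))) ^ i -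
                (β * T) ^ i * Real.exp (-(β * T))) := by
  set a := β * T
  have ha : 0 < a := mul_pos hβ hT
  have hlog : log (exp a / (1 + a)) = a - log (1 + a) := by
    rw [log_div (exp_ne_zero a) (by linarith), log_exp]
  have hsum : ∑ i ∈ Finset.range (j + 1), (1 / (i ! : ℝ)) *
        ((1 + a) * exp (-a) * (a - log (1 + a)) ^ i - a ^ i * exp (-a))
      = exp (-a) * ((1 + a) * expPartialSum j (a - log (1 + a)) - expPartialSum j a) := by
    simp only [expPartialSum, Finset.mul_sum, ← Finset.sum_sub_distrib]
    exact Finset.sum_congr rfl fun i _ => by ring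
  have hexp : exp (-(2 * a)) = exp (-a) * exp (-a) := by
    rw [← exp_add]
    congr 1
    ring
  rw [show 2 * β * T = 2 * a by ring, integral_two_mul_sub_log_one_add_mul_pow ha.ne'
    (by linarith) j, hlog, hsum, hexp]
  field_simp
  ring
end

section
/- Let T > 0 and j a natural number. Then the improper integral (e^{−T}/j!) · ∫₀¹ ( T + log( e^{−T}·(1−s)^{e^{−T}−1} ) )^j ds converges and equals e^{−T}·(1 − e^{−T})^j. -/
/-!
The integrand is a pure power of `-log (1 - s)`: since `log ∂ₛF_T(s) = -T - (1 - e^{-T}) log (1 - s)`,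
it equals `((1 - e^{-T}) (-log (1 - s)))^j`. After `u = 1 - s` and `u = e^{-x}`, the integral
`∫₀¹ (-log u)^j du` becomes `∫₀^∞ e^{-x} x^j dx = Γ(j + 1) = j!`.
-/

open Real MeasureTheory intervalIntegral Set

theorem image_exp_neg_Ioi : (fun x : ℝ => exp (-x)) '' Ioi 0 = Ioo 0 1 := by
  ext u
  constructor
  · rintro ⟨x, hx, rfl⟩
    exact ⟨exp_pos _, exp_lt_one_iff.mpr (neg_lt_zero.mpr hx)⟩
  · rintro ⟨hu₀, hu₁⟩
    exact ⟨-log u, neg_pos.mpr (log_neg hu₀ hu₁), by simp [exp_log hu₀]⟩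

theorem hasDerivAt_exp_neg (x : ℝ) : HasDerivAt (fun x : ℝ => exp (-x)) (-exp (-x)) x := by
  simpa using (hasDerivAt_neg x).exp

theorem injective_exp_neg : Function.Injective fun x : ℝ => exp (-x) :=
  exp_injective.comp neg_injective

section ExpNegSubstitution

variable {E : Type*} [NormedAddCommGroup E] [NormedSpace ℝ E]

theorem integrableOn_Ioo_zero_one_iff_comp_exp_neg (f : ℝ → E) :
    IntegrableOn f (Ioo 0 1) ↔ IntegrableOn (fun x => exp (-x) • f (exp (-x))) (Ioi 0) := by
  rw [← image_exp_neg_Ioi, integrableOn_image_iff_integrableOn_abs_deriv_smul measurableSet_Ioi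
    (fun x _ => (hasDerivAt_exp_neg x).hasDerivWithinAt) injective_exp_neg.injOn]
  simp only [abs_neg, abs_of_pos (exp_pos _)]

theorem setIntegral_Ioo_zero_one_eq_comp_exp_neg (f : ℝ → E) :
    ∫ u in Ioo 0 1, f u = ∫ x in Ioi 0, exp (-x) • f (exp (-x)) := by
  rw [← image_exp_neg_Ioi, integral_image_eq_integral_abs_deriv_smul measurableSet_Ioi
    (fun x _ => (hasDerivAt_exp_neg x).hasDerivWithinAt) injective_exp_neg.injOn]
  simp only [abs_neg, abs_of_pos (exp_pos _)]

end ExpNegSubstitution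

theorem exp_neg_smul_neg_log_exp_neg_pow (n : ℕ) (x : ℝ) :
    exp (-x) • (-log (exp (-x))) ^ n = exp (-x) * x ^ ((n + 1 : ℝ) - 1) := by
  rw [log_exp, neg_neg, add_sub_cancel_right, rpow_natCast, smul_eq_mul]

theorem integrableOn_neg_log_pow (n : ℕ) : IntegrableOn (fun u : ℝ => (-log u) ^ n) (Ioo 0 1) := by
  rw [integrableOn_Ioo_zero_one_iff_comp_exp_neg]
  simpa only [exp_neg_smul_neg_log_exp_neg_pow] using GammaIntegral_convergent (by positivity)

theorem setIntegral_neg_log_pow (n : ℕ) : ∫ u in Ioo 0 1, (-log u) ^ n = n.factorial := by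
  rw [setIntegral_Ioo_zero_one_eq_comp_exp_neg, ← Gamma_nat_eq_factorial,
    Gamma_eq_integral (by positivity)]
  simp only [exp_neg_smul_neg_log_exp_neg_pow]

theorem intervalIntegrable_neg_log_one_sub_pow (n : ℕ) :
    IntervalIntegrable (fun s : ℝ => (-log (1 - s)) ^ n) volume 0 1 := by
  have h : IntervalIntegrable (fun u : ℝ => (-log u) ^ n) volume 0 1 :=
    (intervalIntegrable_iff_integrableOn_Ioo_of_le zero_le_one).mpr (integrableOn_neg_log_pow n)
  simpa using (h.comp_sub_left 1).symm

theorem integral_neg_log_one_sub_pow (n : ℕ) :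
    ∫ s in (0 : ℝ)..1, (-log (1 - s)) ^ n = n.factorial := by
  rw [integral_comp_sub_left (fun u => (-log u) ^ n), sub_self, sub_zero,
    integral_of_le zero_le_one, integral_Ioc_eq_integral_Ioo, setIntegral_neg_log_pow]

theorem add_log_exp_neg_mul_rpow (T : ℝ) {x : ℝ} (hx : 0 < x) :
    T + log (exp (-T) * x ^ (exp (-T) - 1)) = (1 - exp (-T)) * -log x := by
  rw [log_mul (exp_pos _).ne' (rpow_pos_of_pos hx _).ne', log_exp, log_rpow hx]
  ring

theorem heavy_tailed_event_count_general
    (T : ℝ) (j : ℕ) :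
    IntervalIntegrable
        (fun s : ℝ =>
          (T + Real.log (Real.exp (-T) * (1 - s) ^ (Real.exp (-T) - 1))) ^ j)
        MeasureTheory.volume 0 1 ∧
      (Real.exp (-T) / (Nat.factorial j : ℝ)) *
          ∫ s in (0 : ℝ)..1,
            (T + Real.log (Real.exp (-T) * (1 - s) ^ (Real.exp (-T) - 1))) ^ j
        = Real.exp (-T) * (1 - Real.exp (-T)) ^ j := by
  -- Only on the open interval: at `s = 1` the junk value `log 0 = 0` breaks the identity.
  have hpow : EqOn (fun s : ℝ => (T + log (exp (-T) * (1 - s) ^ (exp (-T) - 1))) ^ j)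
      (fun s => (1 - exp (-T)) ^ j * (-log (1 - s)) ^ j) (uIoo 0 1) := fun s hs => by
    rw [uIoo_of_le zero_le_one] at hs
    simp only [add_log_exp_neg_mul_rpow T (sub_pos.mpr hs.2), mul_pow]
  refine ⟨(intervalIntegrable_congr_uIoo hpow).mpr
    ((intervalIntegrable_neg_log_one_sub_pow j).const_mul _), ?_⟩
  rw [integral_congr_uIoo hpow, intervalIntegral.integral_const_mul,
    integral_neg_log_one_sub_pow]
  field_simp

/-- Section 3.4: for the heavy-tailed process the number of ancestral reproduction
events is geometric: `(e^{-T}/j!) ∫₀¹ (T + log(e^{-T}(1-s)^{e^{-T}-1}))^j ds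
  = e^{-T}(1-e^{-T})^j`, the integral being convergent. -/
theorem heavy_tailed_event_count
    (T : ℝ) (hT : 0 < T) (j : ℕ) :
    IntervalIntegrable
        (fun s : ℝ =>
          (T + Real.log (Real.exp (-T) * (1 - s) ^ (Real.exp (-T) - 1))) ^ j)
        MeasureTheory.volume 0 1 ∧
      (Real.exp (-T) / (Nat.factorial j : ℝ)) *
          ∫ s in (0 : ℝ)..1,
            (T + Real.log (Real.exp (-T) * (1 - s) ^ (Real.exp (-T) - 1))) ^ j
        = Real.exp (-T) * (1 - Real.exp (-T)) ^ j :=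
  heavy_tailed_event_count_general T j
end

section
/- Let β > 0. Then lim_{T→∞} [ 2βT − (1+βT) · ∫₀¹ ( 2βT − 2·log(1 + βT(1−s)) ) · (1 + βT(1−s))^{−2} ds ] = 2. -/
open Real MeasureTheory intervalIntegral Filter

/-! Write `c = βT` and `v(s) = 1 + c(1 - s)`. The integrand has the explicit primitive
`(2c - 2 - 2 log v) / (c v)`, so the gap equals `2 - 2 log(1 + c) / c` exactly, and this tends
to `2` because `log` grows sublinearly. -/

lemma hasDerivAt_gap_primitive {c s : ℝ} (hc : c ≠ 0) (hv : 1 + c * (1 - s) ≠ 0) :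
    HasDerivAt (fun s => (2 * c - 2 - 2 * log (1 + c * (1 - s))) / (c * (1 + c * (1 - s))))
      ((2 * c - 2 * log (1 + c * (1 - s))) * ((1 + c * (1 - s)) ^ 2)⁻¹) s := by
  have hv' : HasDerivAt (fun s => 1 + c * (1 - s)) (-c) s := by
    simpa using (((hasDerivAt_id s).const_sub 1).const_mul c).const_add 1
  refine (((hv'.log hv).const_mul 2).const_sub (2 * c - 2)).div (hv'.const_mul c)
    (mul_ne_zero hc hv) |>.congr_deriv ?_
  field_simp
  ring

lemma integral_gap_integrand_eq {c : ℝ} (hc : 0 < c) :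
    ∫ s in (0 : ℝ)..1, (2 * c - 2 * log (1 + c * (1 - s))) * ((1 + c * (1 - s)) ^ 2)⁻¹
      = 2 * (c - 1) / c - 2 * (c - 1 - log (1 + c)) / (c * (1 + c)) := by
  have hv : ∀ s ∈ Set.uIcc (0 : ℝ) 1, 1 + c * (1 - s) ≠ 0 := by
    intro s hs
    rw [Set.uIcc_of_le zero_le_one] at hs
    nlinarith [hs.2]
  rw [integral_eq_sub_of_hasDerivAt (fun s hs => hasDerivAt_gap_primitive hc.ne' (hv s hs))]
  · simp only [sub_self, mul_zero, add_zero, sub_zero, mul_one, log_one]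
    field_simp
  · refine ContinuousOn.intervalIntegrable ?_
    have := fun s hs => pow_ne_zero 2 (hv s hs)
    fun_prop (disch := assumption)

lemma gap_eq_two_sub_log_div {c : ℝ} (hc : 0 < c) :
    2 * c - (1 + c) *
        ∫ s in (0 : ℝ)..1, (2 * c - 2 * log (1 + c * (1 - s))) * ((1 + c * (1 - s)) ^ 2)⁻¹
      = 2 - 2 * (log (1 + c) / c) := by
  rw [integral_gap_integrand_eq hc]
  field_simp
  ring

lemma tendsto_log_one_add_div_self_atTop :
    Tendsto (fun x : ℝ => log (1 + x) / x) atTop (nhds 0) := by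
  have hlog : Tendsto (fun x : ℝ => log (1 + x) / (1 + x)) atTop (nhds 0) :=
    isLittleO_log_id_atTop.tendsto_div_nhds_zero.comp
      (tendsto_atTop_add_const_left _ 1 tendsto_id)
  have hratio : Tendsto (fun x : ℝ => x⁻¹ + 1) atTop (nhds 1) := by
    simpa using tendsto_inv_atTop_zero.add_const (1 : ℝ)
  refine (zero_mul (1 : ℝ) ▸ hlog.mul hratio).congr' ?_
  filter_upwards [eventually_gt_atTop 0] with x hx
  field_simp

/-- Lemma 3.2 in the critical birth-death case: `Gap_T → 2` as `T → ∞`, where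
`Gap_T = 2βT - (1+βT) ∫₀¹ (2βT - 2 log(1+βT(1-s))) (1+βT(1-s))⁻² ds`. -/
theorem critical_gap_tendsto_two (β : ℝ) (hβ : 0 < β) :
    Tendsto
      (fun T : ℝ =>
        2 * β * T - (1 + β * T) *
          ∫ s in (0 : ℝ)..1,
            (2 * β * T - 2 * Real.log (1 + β * T * (1 - s))) *
              ((1 + β * T * (1 - s)) ^ 2)⁻¹)
      atTop (nhds 2) := by
  have hβT : Tendsto (fun T => β * T) atTop atTop := tendsto_id.const_mul_atTop hβ
  have hlim : Tendsto (fun T => 2 - 2 * (log (1 + β * T) / (β * T))) atTop (nhds 2) := by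
    simpa using ((tendsto_log_one_add_div_self_atTop.comp hβT).const_mul 2).const_sub 2
  refine hlim.congr' ?_
  filter_upwards [eventually_gt_atTop 0] with T hT
  rw [mul_assoc 2, gap_eq_two_sub_log_div (mul_pos hβ hT)]
end

section
/- For every real t ≥ 0, the improper integral −∫₀¹ e^{−t}·(1−s)^{e^{−t}−1}·log(1−s) ds converges and equals e^{t}. -/
/-!
After the substitution `u = 1 - s` the integral is `∫₀¹ a u^(a-1) log u du` with `a = e^(-t)`.
Its integrand is the derivative of `u^a (log u - a⁻¹)`, which is continuous on `[0, 1]`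
because `u^a log u → 0` as `u → 0⁺`; so the integral is `-a⁻¹ = -e^t`. Integrability comes
for free, since the integrand has constant sign on `(0, 1)`.
-/

open Real MeasureTheory intervalIntegral Set

namespace Real

variable {a : ℝ}

theorem hasDerivAt_rpow_mul_log_sub_inv (ha : a ≠ 0) {u : ℝ} (hu : 0 < u) :
    HasDerivAt (fun u => u ^ a * (log u - a⁻¹)) (a * u ^ (a - 1) * log u) u := by
  refine ((hasDerivAt_rpow_const (p := a) (Or.inl hu.ne')).mul
    ((hasDerivAt_log hu.ne').sub_const a⁻¹)).congr_deriv ?_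
  rw [rpow_sub_one hu.ne']
  field_simp
  ring

theorem continuousOn_rpow_mul_log (ha : 0 < a) :
    ContinuousOn (fun u => u ^ a * log u) (Ici 0) := by
  intro u hu
  rcases (mem_Ici.mp hu).eq_or_lt with rfl | hu
  · rw [← continuousWithinAt_Ioi_iff_Ici, ContinuousWithinAt]
    simpa [zero_rpow ha.ne', mul_comm] using tendsto_log_mul_rpow_nhdsGT_zero ha
  · exact ((continuousAt_rpow_const u a (Or.inl hu.ne')).mul
      (continuousAt_log hu.ne')).continuousWithinAt

theorem continuousOn_rpow_mul_log_sub_inv (ha : 0 < a) :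
    ContinuousOn (fun u => u ^ a * (log u - a⁻¹)) (Ici 0) := by
  simp_rw [mul_sub]
  exact (continuousOn_rpow_mul_log ha).sub
    ((continuous_rpow_const ha.le).continuousOn.mul continuousOn_const)

theorem intervalIntegrable_mul_rpow_sub_one_mul_log (ha : 0 < a) :
    IntervalIntegrable (fun u => a * u ^ (a - 1) * log u) volume 0 1 := by
  have hcont : ContinuousOn (fun u => -(u ^ a * (log u - a⁻¹))) (uIcc 0 1) :=
    (continuousOn_rpow_mul_log_sub_inv ha).neg.mono (by simp [uIcc_of_le, Icc_subset_Ici_self])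
  have hnonneg := intervalIntegrable_deriv_of_nonneg hcont
    (g' := fun u => -(a * u ^ (a - 1) * log u))
    (fun u hu => (hasDerivAt_rpow_mul_log_sub_inv ha.ne' (by simpa using hu.1)).neg)
    (fun u hu => by
      obtain ⟨hu0, hu1⟩ : 0 < u ∧ u < 1 := by simpa using hu
      exact neg_nonneg.mpr (mul_nonpos_of_nonneg_of_nonpos
        (mul_pos ha (rpow_pos_of_pos hu0 _)).le (log_nonpos hu0.le hu1.le)))
  simpa [Pi.neg_def] using hnonneg.neg

theorem integral_mul_rpow_sub_one_mul_log (ha : 0 < a) :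
    ∫ u in (0 : ℝ)..1, a * u ^ (a - 1) * log u = -a⁻¹ := by
  rw [integral_eq_sub_of_hasDerivAt_of_le zero_le_one
    ((continuousOn_rpow_mul_log_sub_inv ha).mono Icc_subset_Ici_self)
    (fun u hu => hasDerivAt_rpow_mul_log_sub_inv ha.ne' hu.1)
    (intervalIntegrable_mul_rpow_sub_one_mul_log ha)]
  simp [zero_rpow ha.ne']

end Real

theorem heavy_tailed_ancestral_rate_general (t : ℝ) :
    IntervalIntegrable
        (fun s : ℝ =>
          Real.exp (-t) * (1 - s) ^ (Real.exp (-t) - 1) * Real.log (1 - s))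
        MeasureTheory.volume 0 1 ∧
      -∫ s in (0 : ℝ)..1,
          Real.exp (-t) * (1 - s) ^ (Real.exp (-t) - 1) * Real.log (1 - s)
        = Real.exp t := by
  have ha : 0 < exp (-t) := exp_pos _
  constructor
  · simpa using ((intervalIntegrable_mul_rpow_sub_one_mul_log ha).comp_sub_left 1).symm
  · rw [integral_comp_sub_left (fun u => exp (-t) * u ^ (exp (-t) - 1) * log u) 1, sub_self,
      sub_zero, integral_mul_rpow_sub_one_mul_log ha, neg_neg, exp_neg, inv_inv]

/-- Section 4.1: the ancestral reproduction rate of the heavy-tailed process,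
`-∫₀¹ e^{-t}(1-s)^{e^{-t}-1} log(1-s) ds = e^t`, the integral being convergent. -/
theorem heavy_tailed_ancestral_rate (t : ℝ) (ht : 0 ≤ t) :
    IntervalIntegrable
        (fun s : ℝ =>
          Real.exp (-t) * (1 - s) ^ (Real.exp (-t) - 1) * Real.log (1 - s))
        MeasureTheory.volume 0 1 ∧
      -∫ s in (0 : ℝ)..1,
          Real.exp (-t) * (1 - s) ^ (Real.exp (-t) - 1) * Real.log (1 - s)
        = Real.exp t :=
  heavy_tailed_ancestral_rate_general t
end
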